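/- arXiv:1810.01411 — 2 statements merged into one kernel-verified Lean document; each statement's English description precedes it below -/
import Mathlib

section
/- For the scalar delay differential equation Ṙ(t) = κR(t)(C − Σ_{r∈S} R(t−τ_r)) with κ > 0, heterogeneous delays τ_r ≥ 0 with mean T̄, |S| = N, if a := κCT̄ < 1/2 and the initial condition R is positive and bounded on [−max τ_r, 0], then R(t) → C/N as t → ∞. -/
/-!
Positivity comes from the integrating factor, and `y = log R` satisfies
`y' = κ (C - Σ_r R (t - τ_r))`. Barrier arguments for `y` bound `R` above and away from zero, so
`l = liminf R` and `Λ = limsup R` are finite and positive. If `l = Λ`, the limit `L` of `R` forces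
`y' → κ (C - N L) = 0`. Otherwise, at late times where `R` rises through a level close to `Λ`, the
delayed sum is at most `C`; integrating `y'` over the delay windows and applying Jensen's
inequality to `log` gives `log (Λ / m) ≤ κ (Σ_r τ_r) (m - l)` with `m = C / N`. Symmetrically,
where `R` falls through a level close to `l`, bounding `log` below by its chord on `[l, Λ]` gives
`(m - l) (log Λ - log l) / (Λ - l) ≤ κ (Σ_r τ_r) (Λ - m)`. As `κ (Σ_r τ_r) m = κ C T̄ < 1/2`, the
two inequalities together force `Λ ≤ l`.
-/

open Set Filter Topology Real
open scoped Finset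

section Calculus

variable {f f' : ℝ → ℝ}

theorem sub_le_mul_sub_of_hasDerivAt_le {s t K : ℝ} (hst : s ≤ t) (hf : ContinuousOn f (Icc s t))
    (hd : ∀ x ∈ Ioo s t, HasDerivAt f (f' x) x) (hK : ∀ x ∈ Ioo s t, f' x ≤ K) :
    f t - f s ≤ K * (t - s) := by
  rcases hst.eq_or_lt with rfl | hst
  · simp
  obtain ⟨c, hc, hslope⟩ := exists_hasDerivAt_eq_slope f f' hst hf hd
  exact (div_le_iff₀ (sub_pos.2 hst)).1 (hslope ▸ hK c hc)

theorem mul_sub_le_sub_of_le_hasDerivAt {s t K : ℝ} (hst : s ≤ t) (hf : ContinuousOn f (Icc s t))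
    (hd : ∀ x ∈ Ioo s t, HasDerivAt f (f' x) x) (hK : ∀ x ∈ Ioo s t, K ≤ f' x) :
    K * (t - s) ≤ f t - f s := by
  have := sub_le_mul_sub_of_hasDerivAt_le (f := fun x ↦ -f x) (f' := fun x ↦ -f' x) (K := -K) hst
    hf.neg (fun x hx ↦ (hd x hx).neg) (fun x hx ↦ neg_le_neg (hK x hx))
  linarith

theorem exists_hasDerivAt_pos_of_upcrossing {s t c₁ c₂ : ℝ} (hst : s ≤ t)
    (hf : ContinuousOn f (Icc s t)) (hd : ∀ x ∈ Ioo s t, HasDerivAt f (f' x) x)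
    (hs : f s ≤ c₁) (hc : c₁ < c₂) (ht : c₂ ≤ f t) :
    ∃ x ∈ Ioo s t, f x ∈ Ioo c₁ c₂ ∧ 0 < f' x := by
  -- `s₁` is the last time `f ≤ c₁`, `s₂` the first time after `s₁` that `f ≥ c₂`
  obtain ⟨s₁, ⟨hs₁, hfs₁⟩, hlast⟩ := (isCompact_Icc.of_isClosed_subset
    (hf.preimage_isClosed_of_isClosed isClosed_Icc isClosed_Iic)
    inter_subset_left).exists_isGreatest ⟨s, left_mem_Icc.2 hst, hs⟩
  replace hfs₁ : f s₁ ≤ c₁ := hfs₁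
  have hf₁ : ContinuousOn f (Icc s₁ t) := hf.mono (Icc_subset_Icc_left hs₁.1)
  obtain ⟨s₂, ⟨hs₂, hfs₂⟩, hfirst⟩ := (isCompact_Icc.of_isClosed_subset
    (hf₁.preimage_isClosed_of_isClosed isClosed_Icc isClosed_Ici) inter_subset_left).exists_isLeast
    ⟨t, right_mem_Icc.2 hs₁.2, ht⟩
  replace hfs₂ : c₂ ≤ f s₂ := hfs₂
  have hlt : s₁ < s₂ := hs₂.1.lt_of_ne (by rintro rfl; linarith)
  obtain ⟨x, hx, hslope⟩ := exists_hasDerivAt_eq_slope f f' hlt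
    (hf.mono (Icc_subset_Icc hs₁.1 hs₂.2))
    (fun x hx ↦ hd x ⟨hs₁.1.trans_lt hx.1, hx.2.trans_le hs₂.2⟩)
  refine ⟨x, ⟨hs₁.1.trans_lt hx.1, hx.2.trans_le hs₂.2⟩, ⟨?_, ?_⟩, ?_⟩
  · by_contra! h
    exact hx.1.not_ge (hlast ⟨⟨hs₁.1.trans hx.1.le, hx.2.le.trans hs₂.2⟩, h⟩)
  · by_contra! h
    exact hx.2.not_ge (hfirst ⟨⟨hx.1.le, hx.2.le.trans hs₂.2⟩, h⟩)
  · rw [hslope]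
    exact div_pos (by linarith) (sub_pos.2 hlt)

theorem le_of_hasDerivAt_nonpos_above {a K t : ℝ} (hf : ContinuousOn f (Ici a))
    (hd : ∀ x ∈ Ioi a, HasDerivAt f (f' x) x) (hK : ∀ x ∈ Ioi a, K < f x → f' x ≤ 0)
    (ha : f a ≤ K) (ht : a ≤ t) : f t ≤ K := by
  by_contra! hKt
  obtain ⟨x, hx, hfx, hf'x⟩ := exists_hasDerivAt_pos_of_upcrossing ht (hf.mono Icc_subset_Ici_self)
    (fun x hx ↦ hd x hx.1) ha hKt le_rfl
  exact (hK x hx.1 hfx.1).not_gt hf'x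

theorem le_of_hasDerivAt_nonneg_below {a K t : ℝ} (hf : ContinuousOn f (Ici a))
    (hd : ∀ x ∈ Ioi a, HasDerivAt f (f' x) x) (hK : ∀ x ∈ Ioi a, f x < K → 0 ≤ f' x)
    (ha : K ≤ f a) (ht : a ≤ t) : K ≤ f t :=
  neg_le_neg_iff.1 <| le_of_hasDerivAt_nonpos_above (f := fun x ↦ -f x) (f' := fun x ↦ -f' x) hf.neg
    (fun x hx ↦ (hd x hx).neg) (fun x hx h ↦ neg_nonpos.2 (hK x hx (neg_lt_neg_iff.1 h)))
    (neg_le_neg ha) ht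

theorem frequently_hasDerivAt_pos {c₁ c₂ : ℝ} (hf : Continuous f)
    (hd : ∀ᶠ x in atTop, HasDerivAt f (f' x) x) (hc : c₁ < c₂)
    (hlow : ∃ᶠ x in atTop, f x ≤ c₁) (hhigh : ∃ᶠ x in atTop, c₂ ≤ f x) :
    ∃ᶠ x in atTop, f x ∈ Ioo c₁ c₂ ∧ 0 < f' x := by
  rw [frequently_atTop]
  intro T
  obtain ⟨T', hT'⟩ := eventually_atTop.1 hd
  obtain ⟨s, hs, hfs⟩ := frequently_atTop.1 hlow (max T T')
  obtain ⟨t, hst, hft⟩ := frequently_atTop.1 hhigh s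
  obtain ⟨x, hx, hfx⟩ := exists_hasDerivAt_pos_of_upcrossing hst hf.continuousOn
    (fun x hx ↦ hT' x ((le_max_right T T').trans (hs.trans hx.1.le))) hfs hc hft
  exact ⟨x, (le_max_left T T').trans (hs.trans hx.1.le), hfx⟩

theorem nonpos_of_tendsto_of_hasDerivAt {l c : ℝ} (hf : Tendsto f atTop (𝓝 l))
    (hd : ∀ᶠ x in atTop, HasDerivAt f (f' x) x) (hf' : Tendsto f' atTop (𝓝 c)) : c ≤ 0 := by
  by_contra! hc
  obtain ⟨T, hT⟩ := eventually_atTop.1 (hd.and (hf'.eventually (lt_mem_nhds (half_lt_self hc))))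
  have hlin : Tendsto (fun t ↦ f T + c / 2 * (t - T)) atTop atTop :=
    tendsto_atTop_add_const_left _ _
      ((tendsto_atTop_add_const_right _ _ tendsto_id).const_mul_atTop (half_pos hc))
  refine not_tendsto_atTop_of_tendsto_nhds hf (tendsto_atTop_mono' _ ?_ hlin)
  filter_upwards [eventually_ge_atTop T] with t ht
  have := mul_sub_le_sub_of_le_hasDerivAt ht
    (fun x hx ↦ (hT x hx.1).1.continuousAt.continuousWithinAt)
    (fun x hx ↦ (hT x hx.1.le).1) (fun x hx ↦ (hT x hx.1.le).2.le)
  linarith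

theorem eq_zero_of_tendsto_of_hasDerivAt {l c : ℝ} (hf : Tendsto f atTop (𝓝 l))
    (hd : ∀ᶠ x in atTop, HasDerivAt f (f' x) x) (hf' : Tendsto f' atTop (𝓝 c)) : c = 0 :=
  le_antisymm (nonpos_of_tendsto_of_hasDerivAt hf hd hf') <| neg_nonpos.1 <|
    nonpos_of_tendsto_of_hasDerivAt hf.neg (hd.mono fun _ h ↦ h.neg) hf'.neg

theorem pos_of_hasDerivAt_mul {g : ℝ → ℝ} (hf : Continuous f) (hg : Continuous g)
    (hd : ∀ x > 0, HasDerivAt f (g x * f x) x) (h0 : 0 < f 0) {t : ℝ} (ht : 0 ≤ t) :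
    0 < f t := by
  set G := fun x ↦ ∫ y in (0 : ℝ)..x, g y
  have hG : ∀ x, HasDerivAt G (g x) x := fun x ↦ hg.integral_hasStrictDerivAt 0 x |>.hasDerivAt
  -- integrating factor: `f · exp (-G)` has zero derivative on `(0, ∞)`
  have hF := mul_sub_le_sub_of_le_hasDerivAt (f := fun x ↦ f x * exp (-G x)) (K := 0) ht
    (hf.mul (continuous_iff_continuousAt.2 fun x ↦ (hG x).continuousAt).neg.rexp).continuousOn
    (fun x hx ↦ ((hd x hx.1).mul (hG x).neg.exp).congr_deriv (by ring)) (fun _ _ ↦ le_rfl)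
  simp only [G, intervalIntegral.integral_same, neg_zero, exp_zero, mul_one, zero_mul] at hF
  exact pos_of_mul_pos_left (h0.trans_le (sub_nonneg.1 hF)) (exp_pos _).le

end Calculus

theorem le_of_forall_mem_Ioo_le {f g : ℝ → ℝ} {δ : ℝ} (hδ : 0 < δ) (hf : ContinuousAt f 0)
    (hg : ContinuousAt g 0) (hfg : ∀ e ∈ Ioo 0 δ, f e ≤ g e) : f 0 ≤ g 0 :=
  le_of_tendsto_of_tendsto (hf.tendsto.mono_left nhdsWithin_le_nhds)
    (hg.tendsto.mono_left nhdsWithin_le_nhds) (eventually_of_mem (Ioo_mem_nhdsGT hδ) hfg)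

theorem sum_log_le_card_mul_log_avg {ι : Type*} {s : Finset ι} (hs : s.Nonempty) {x : ι → ℝ}
    (hx : ∀ i ∈ s, 0 < x i) : ∑ i ∈ s, log (x i) ≤ #s * log ((∑ i ∈ s, x i) / #s) := by
  have hcard : (0 : ℝ) < #s := by exact_mod_cast hs.card_pos
  have h := strictConcaveOn_log_Ioi.concaveOn.le_map_sum (t := s) (w := fun _ ↦ (#s : ℝ)⁻¹)
    (p := x) (fun _ _ ↦ by positivity) (by simp [hcard.ne']) hx
  simp only [smul_eq_mul, ← Finset.mul_sum] at h
  rw [inv_mul_eq_div, inv_mul_eq_div, div_le_iff₀' hcard] at h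
  exact h

theorem log_add_mul_slope_le_log {a b u : ℝ} (ha : 0 < a) (hau : a ≤ u) (hub : u ≤ b) :
    log a + (u - a) * ((log b - log a) / (b - a)) ≤ log u := by
  rcases hau.eq_or_lt with rfl | hau
  · simp
  rcases hub.eq_or_lt with rfl | hub
  · rw [mul_div_cancel₀ _ (sub_pos.2 hau).ne']
    linarith
  have hslope := strictConcaveOn_log_Ioi.secant_strict_mono (mem_Ioi.2 ha)
    (mem_Ioi.2 (ha.trans hau)) (mem_Ioi.2 (ha.trans (hau.trans hub))) hau.ne'
    (hau.trans hub).ne' hub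
  have := (le_div_iff₀' (sub_pos.2 hau)).1 hslope.le
  linarith

theorem mul_one_sub_le_of_log_le_add {L m x : ℝ} (hL : 0 < L) (hm : 0 < m) (hx : x < 1)
    (h : log L ≤ log m + x) : L * (1 - x) ≤ m := by
  have := log_le_sub_one_of_pos (sub_pos.2 hx)
  rw [← log_le_log_iff (mul_pos hL (sub_pos.2 hx)) hm, log_mul hL.ne' (sub_pos.2 hx).ne']
  linarith

theorem le_of_log_sub_log_le {k m l L : ℝ} (hk : 0 ≤ k) (hkm : k * m < 1 / 2) (hl : 0 < l)
    (hlm : l ≤ m) (h₁ : log L - log m ≤ k * (m - l))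
    (h₂ : (m - l) * ((log L - log l) / (L - l)) ≤ k * (L - m)) : L ≤ l := by
  by_contra! hlL
  have hm : 0 < m := hl.trans_le hlm
  have hlogL : log l < log L := log_lt_log hl hlL
  have hW : 0 < m - l := sub_pos.2 <| hlm.lt_of_ne <| by
    rintro rfl
    linarith
  rw [mul_div_assoc', div_le_iff₀ (sub_pos.2 hlL)] at h₂
  have hD : 0 < L - m := by
    by_contra! hD
    nlinarith [mul_pos hW (sub_pos.2 hlogL), mul_nonpos_of_nonneg_of_nonpos hk hD]
  have hkW : k * (m - l) < 1 / 2 := by nlinarith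
  have hD2 : L - m < 2 * k * m * (m - l) := by
    have := mul_one_sub_le_of_log_le_add (hl.trans hlL) hm (x := k * (m - l)) (by linarith)
      (by linarith)
    nlinarith
  have hkpos : 0 < k := hk.lt_of_ne <| by
    rintro rfl
    linarith
  have hlog_ml : (m - l) / m ≤ log m - log l := by
    have := one_sub_inv_le_log_of_pos (div_pos hm hl)
    rw [log_div hm.ne' hl.ne', inv_div] at this
    rwa [sub_div, div_self hm.ne']
  have hW2 : (m - l) * (m - l) ≤ m * (k * (L - m) * ((L - m) + (m - l))) := by
    have : (m - l) * ((m - l) / m) ≤ (m - l) * (log L - log l) :=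
      mul_le_mul_of_nonneg_left (by linarith [log_le_log hm (sub_pos.1 hD).le]) hW.le
    rw [mul_div_assoc', div_le_iff₀ hm] at this
    nlinarith [mul_le_mul_of_nonneg_right h₂ hm.le]
  -- `(m - l)² ≤ m k D (D + (m - l))` with `D = L - m < 2 k m (m - l)`, and `k m < 1 / 2`
  have hx : 2 * (k * m) ^ 2 * (2 * (k * m) + 1) < 1 := by nlinarith [mul_nonneg hk hm.le]
  have : m * (k * (L - m) * ((L - m) + (m - l))) <
      (m - l) * (m - l) * (2 * (k * m) ^ 2 * (2 * (k * m) + 1)) := by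
    have := mul_lt_mul'' hD2 (add_lt_add_of_lt_of_le hD2 le_rfl) hD.le (by positivity)
    nlinarith [mul_lt_mul_of_pos_left this (mul_pos hm hkpos)]
  nlinarith [mul_lt_mul_of_pos_left hx (mul_pos hW hW)]

def delaySum {ι : Type*} (S : Finset ι) (τ : ι → ℝ) (R : ℝ → ℝ) (t : ℝ) : ℝ :=
  ∑ r ∈ S, R (t - τ r)

section DelaySum

variable {ι : Type*} {S : Finset ι} {τ : ι → ℝ} {R : ℝ → ℝ}

theorem continuous_delaySum (hR : Continuous R) : Continuous (delaySum S τ R) :=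
  continuous_finsetSum _ fun _ _ ↦ hR.comp (continuous_sub_right _)

theorem card_mul_le_delaySum {t ℓ : ℝ} (h : ∀ r ∈ S, ℓ ≤ R (t - τ r)) :
    #S * ℓ ≤ delaySum S τ R t := by
  simpa [delaySum] using S.card_nsmul_le_sum _ ℓ h

theorem delaySum_le_card_mul {t L : ℝ} (h : ∀ r ∈ S, R (t - τ r) ≤ L) :
    delaySum S τ R t ≤ #S * L := by
  simpa [delaySum] using S.sum_le_card_nsmul _ L h

end DelaySum

structure IsRCPSolution {ι : Type*} (S : Finset ι) (τ : ι → ℝ) (τmax C κ : ℝ) (R : ℝ → ℝ) :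
    Prop where
  delay_nonneg : ∀ r ∈ S, 0 ≤ τ r
  delay_le : ∀ r ∈ S, τ r ≤ τmax
  τmax_nonneg : 0 ≤ τmax
  C_pos : 0 < C
  κ_pos : 0 < κ
  continuous : Continuous R
  pos_of_mem_Icc : ∀ t ∈ Icc (-τmax) 0, 0 < R t
  hasDerivAt : ∀ t > 0, HasDerivAt R (κ * R t * (C - delaySum S τ R t)) t

namespace IsRCPSolution

variable {ι : Type*} {S : Finset ι} {τ : ι → ℝ} {τmax C κ : ℝ} {R : ℝ → ℝ}

theorem pos (h : IsRCPSolution S τ τmax C κ R) {t : ℝ} (ht : -τmax ≤ t) : 0 < R t := by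
  rcases le_or_gt t 0 with ht₀ | ht₀
  · exact h.pos_of_mem_Icc t ⟨ht, ht₀⟩
  · refine pos_of_hasDerivAt_mul (g := fun x ↦ κ * (C - delaySum S τ R x)) h.continuous
      (continuous_const.mul (continuous_const.sub (continuous_delaySum h.continuous)))
      (fun x hx ↦ (h.hasDerivAt x hx).congr_deriv (by ring)) ?_ ht₀.le
    exact h.pos_of_mem_Icc 0 ⟨neg_nonpos.2 h.τmax_nonneg, le_rfl⟩

theorem pos_sub_delay (h : IsRCPSolution S τ τmax C κ R) {t : ℝ} (ht : 0 ≤ t) {r : ι}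
    (hr : r ∈ S) : 0 < R (t - τ r) :=
  h.pos (by linarith [h.delay_le r hr])

theorem delaySum_nonneg (h : IsRCPSolution S τ τmax C κ R) {t : ℝ} (ht : 0 ≤ t) :
    0 ≤ delaySum S τ R t :=
  Finset.sum_nonneg fun _ hr ↦ (h.pos_sub_delay ht hr).le

theorem continuousOn_log (h : IsRCPSolution S τ τmax C κ R) :
    ContinuousOn (fun t ↦ log (R t)) (Ici (-τmax)) :=
  h.continuous.continuousOn.log fun _ ht ↦ (h.pos ht).ne'

theorem hasDerivAt_log (h : IsRCPSolution S τ τmax C κ R) {t : ℝ} (ht : 0 < t) :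
    HasDerivAt (fun t ↦ log (R t)) (κ * (C - delaySum S τ R t)) t := by
  have hR := h.pos (t := t) (by linarith [h.τmax_nonneg])
  exact ((h.hasDerivAt t ht).log hR.ne').congr_deriv (by field_simp)

theorem log_sub_log_le (h : IsRCPSolution S τ τmax C κ R) {t K : ℝ} (ht : τmax ≤ t)
    (hK : ∀ u ∈ Ioo (t - τmax) t, κ * (C - delaySum S τ R u) ≤ K) {r : ι} (hr : r ∈ S) :
    log (R t) - log (R (t - τ r)) ≤ K * τ r := by
  have hτ := h.delay_le r hr
  have := sub_le_mul_sub_of_hasDerivAt_le (s := t - τ r) (t := t)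
    (by linarith [h.delay_nonneg r hr])
    (h.continuousOn_log.mono fun u hu ↦ by simp only [Set.mem_Ici]; linarith [hu.1, h.τmax_nonneg])
    (fun u hu ↦ h.hasDerivAt_log (by linarith [hu.1])) (fun u hu ↦ hK u ⟨by linarith [hu.1], hu.2⟩)
  rwa [sub_sub_cancel] at this

theorem mul_le_log_sub_log (h : IsRCPSolution S τ τmax C κ R) {t K : ℝ} (ht : τmax ≤ t)
    (hK : ∀ u ∈ Ioo (t - τmax) t, K ≤ κ * (C - delaySum S τ R u)) {r : ι} (hr : r ∈ S) :
    K * τ r ≤ log (R t) - log (R (t - τ r)) := by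
  have hτ := h.delay_le r hr
  have := mul_sub_le_sub_of_le_hasDerivAt (s := t - τ r) (t := t)
    (by linarith [h.delay_nonneg r hr])
    (h.continuousOn_log.mono fun u hu ↦ by simp only [Set.mem_Ici]; linarith [hu.1, h.τmax_nonneg])
    (fun u hu ↦ h.hasDerivAt_log (by linarith [hu.1])) (fun u hu ↦ hK u ⟨by linarith [hu.1], hu.2⟩)
  rwa [sub_sub_cancel] at this

theorem exists_upper_bound (h : IsRCPSolution S τ τmax C κ R) (hS : S.Nonempty) :
    ∃ B, ∀ t ≥ -τmax, R t ≤ B := by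
  have hN : (0 : ℝ) < #S := by exact_mod_cast hS.card_pos
  set K := max (log (C / #S) + κ * C * τmax) (log (R τmax))
  -- above level `K`, every delayed value exceeds `C / #S`, so `log R` cannot increase
  have hK : ∀ t ≥ τmax, log (R t) ≤ K := fun t ht ↦ by
    refine le_of_hasDerivAt_nonpos_above (f := fun t ↦ log (R t))
      (h.continuousOn_log.mono (Ici_subset_Ici.2 (by linarith [h.τmax_nonneg])))
      (fun x hx ↦ h.hasDerivAt_log (h.τmax_nonneg.trans_lt hx))
      (fun x (hx : τmax < x) hKx ↦ ?_) (le_max_right _ _) ht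
    have hdelayed : ∀ r ∈ S, C / #S ≤ R (x - τ r) := fun r hr ↦ by
      have hslope := h.log_sub_log_le (K := κ * C) hx.le (fun u hu ↦ by
        nlinarith [h.κ_pos, h.delaySum_nonneg (t := u) (by linarith [hu.1, h.τmax_nonneg])]) hr
      have := mul_le_mul_of_nonneg_left (h.delay_le r hr) (mul_pos h.κ_pos h.C_pos).le
      rw [← log_le_log_iff (div_pos h.C_pos hN) (h.pos_sub_delay (by linarith [h.τmax_nonneg]) hr)]
      linarith [le_max_left (log (C / #S) + κ * C * τmax) (log (R τmax))]
    have := card_mul_le_delaySum hdelayed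
    rw [mul_div_cancel₀ _ hN.ne'] at this
    nlinarith [h.κ_pos]
  obtain ⟨M, hM⟩ := isCompact_Icc.bddAbove_image (h.continuous.continuousOn (s := Icc (-τmax) τmax))
  refine ⟨max M (exp K), fun t ht ↦ ?_⟩
  rcases le_or_gt t τmax with htτ | htτ
  · exact (hM ⟨t, ⟨ht, htτ⟩, rfl⟩).trans (le_max_left _ _)
  · calc R t = exp (log (R t)) := (exp_log (h.pos ht)).symm
      _ ≤ exp K := exp_le_exp.2 (hK t htτ.le)
      _ ≤ _ := le_max_right _ _

theorem exists_pos_lower_bound (h : IsRCPSolution S τ τmax C κ R) (hS : S.Nonempty) {B : ℝ}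
    (hB : ∀ t ≥ -τmax, R t ≤ B) : ∃ b > 0, ∀ t ≥ -τmax, b ≤ R t := by
  have hN : (0 : ℝ) < #S := by exact_mod_cast hS.card_pos
  have hB₀ : 0 < B :=
    (h.pos (neg_nonpos.2 h.τmax_nonneg)).trans_le (hB 0 (neg_nonpos.2 h.τmax_nonneg))
  set K := min (log (C / #S) - κ * #S * B * τmax) (log (R τmax))
  -- below level `K`, every delayed value is below `C / #S`, so `log R` cannot decrease
  have hK : ∀ t ≥ τmax, K ≤ log (R t) := fun t ht ↦ by
    refine le_of_hasDerivAt_nonneg_below (f := fun t ↦ log (R t))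
      (h.continuousOn_log.mono (Ici_subset_Ici.2 (by linarith [h.τmax_nonneg])))
      (fun x hx ↦ h.hasDerivAt_log (h.τmax_nonneg.trans_lt hx))
      (fun x (hx : τmax < x) hKx ↦ ?_) (min_le_right _ _) ht
    have hdelayed : ∀ r ∈ S, R (x - τ r) ≤ C / #S := fun r hr ↦ by
      have hslope := h.mul_le_log_sub_log (K := -(κ * #S * B)) hx.le (fun u hu ↦ by
        have := delaySum_le_card_mul (S := S) (τ := τ) (t := u) fun q hq ↦
          hB _ (by linarith [hu.1, h.delay_le q hq])
        nlinarith [h.κ_pos, h.C_pos]) hr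
      have := mul_le_mul_of_nonneg_left (h.delay_le r hr) (mul_pos (mul_pos h.κ_pos hN) hB₀).le
      rw [← log_le_log_iff (h.pos_sub_delay (by linarith [h.τmax_nonneg]) hr) (div_pos h.C_pos hN)]
      linarith [min_le_left (log (C / #S) - κ * #S * B * τmax) (log (R τmax))]
    have := delaySum_le_card_mul hdelayed
    rw [mul_div_cancel₀ _ hN.ne'] at this
    nlinarith [h.κ_pos]
  obtain ⟨x₀, hx₀, hmin⟩ := isCompact_Icc.exists_isMinOn
    (nonempty_Icc.2 (by linarith [h.τmax_nonneg]))
    (h.continuous.continuousOn (s := Icc (-τmax) τmax))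
  refine ⟨min (R x₀) (exp K), lt_min (h.pos hx₀.1) (exp_pos K), fun t ht ↦ ?_⟩
  rcases le_or_gt t τmax with htτ | htτ
  · exact (min_le_left _ _).trans (hmin ⟨ht, htτ⟩)
  · calc min (R x₀) (exp K) ≤ exp K := min_le_right _ _
      _ ≤ exp (log (R t)) := exp_le_exp.2 (hK t htτ.le)
      _ = R t := exp_log (h.pos ht)

theorem eq_of_tendsto (h : IsRCPSolution S τ τmax C κ R) (hS : S.Nonempty) {L : ℝ}
    (hL : Tendsto R atTop (𝓝 L)) (hL₀ : 0 < L) : L = C / #S := by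
  have hN : (0 : ℝ) < #S := by exact_mod_cast hS.card_pos
  have hP : Tendsto (delaySum S τ R) atTop (𝓝 (#S * L)) := by
    show Tendsto (fun t ↦ ∑ r ∈ S, R (t - τ r)) atTop _
    have := tendsto_finsetSum S fun r _ ↦
      hL.comp (tendsto_atTop_add_const_right _ (-τ r) tendsto_id)
    simpa [sub_eq_add_neg] using this
  have := eq_zero_of_tendsto_of_hasDerivAt ((continuousAt_log hL₀.ne').tendsto.comp hL)
    ((eventually_gt_atTop 0).mono fun t ht ↦ h.hasDerivAt_log ht)
    ((tendsto_const_nhds.sub hP).const_mul κ)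
  rw [eq_div_iff hN.ne']
  have := (mul_eq_zero.1 this).resolve_left h.κ_pos.ne'
  linarith

theorem log_le_of_delaySum_le (h : IsRCPSolution S τ τmax C κ R) (hS : S.Nonempty) {t ℓ : ℝ}
    (ht : 2 * τmax ≤ t) (hPt : delaySum S τ R t ≤ C)
    (hℓ : ∀ u ∈ Icc (t - 2 * τmax) t, ℓ ≤ R u) :
    log (R t) ≤ log (C / #S) + κ * (∑ r ∈ S, τ r) * (C / #S - ℓ) := by
  have hN : (0 : ℝ) < #S := by exact_mod_cast hS.card_pos
  have ht₀ : 0 ≤ t := by linarith [h.τmax_nonneg]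
  have hwindow : ∀ r ∈ S, log (R t) - log (R (t - τ r)) ≤ κ * (C - #S * ℓ) * τ r :=
    fun r hr ↦ h.log_sub_log_le (by linarith) (fun u hu ↦ by
      have := card_mul_le_delaySum (S := S) (τ := τ) (R := R) (t := u) fun q hq ↦
        hℓ _ ⟨by linarith [hu.1, h.delay_le q hq], by linarith [hu.2, h.delay_nonneg q hq]⟩
      nlinarith [h.κ_pos]) hr
  have hsum := Finset.sum_le_sum hwindow
  rw [Finset.sum_sub_distrib, Finset.sum_const, nsmul_eq_mul, ← Finset.mul_sum] at hsum
  -- Jensen for `log` at the delayed values, whose sum is at most `C`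
  have hjensen : ∑ r ∈ S, log (R (t - τ r)) ≤ #S * log (delaySum S τ R t / #S) :=
    sum_log_le_card_mul_log_avg hS fun r hr ↦ h.pos_sub_delay ht₀ hr
  have hP₀ : 0 < delaySum S τ R t := Finset.sum_pos (fun r hr ↦ h.pos_sub_delay ht₀ hr) hS
  have hlog : log (delaySum S τ R t / #S) ≤ log (C / #S) :=
    log_le_log (div_pos hP₀ hN) (div_le_div_of_nonneg_right hPt hN.le)
  have hexpand : #S * (log (C / #S) + κ * (∑ r ∈ S, τ r) * (C / #S - ℓ)) =
      #S * log (C / #S) + κ * (C - #S * ℓ) * ∑ r ∈ S, τ r := by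
    field_simp
  rw [← mul_le_mul_iff_of_pos_left hN, hexpand]
  linarith [mul_le_mul_of_nonneg_left hlog hN.le]

theorem le_log_of_le_delaySum (h : IsRCPSolution S τ τmax C κ R) (hS : S.Nonempty)
    {t ℓ L : ℝ} (hℓ₀ : 0 < ℓ) (ht : 2 * τmax ≤ t) (hPt : C ≤ delaySum S τ R t)
    (hℓL : ∀ u ∈ Icc (t - 2 * τmax) t, R u ∈ Icc ℓ L) :
    log ℓ + (C / #S - ℓ) * ((log L - log ℓ) / (L - ℓ)) - κ * (∑ r ∈ S, τ r) * (L - C / #S) ≤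
      log (R t) := by
  have hN : (0 : ℝ) < #S := by exact_mod_cast hS.card_pos
  have ht₀ : 0 ≤ t := by linarith [h.τmax_nonneg]
  have hmem : ∀ r ∈ S, R (t - τ r) ∈ Icc ℓ L := fun r hr ↦
    hℓL _ ⟨by linarith [h.delay_le r hr, h.τmax_nonneg], by linarith [h.delay_nonneg r hr]⟩
  have hℓL' : ℓ ≤ L := nonempty_Icc.1 ⟨R t, hℓL t ⟨by linarith [h.τmax_nonneg], le_rfl⟩⟩
  set s := (log L - log ℓ) / (L - ℓ)
  have hs : 0 ≤ s := div_nonneg (sub_nonneg.2 (log_le_log hℓ₀ hℓL')) (sub_nonneg.2 hℓL')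
  have hwindow : ∀ r ∈ S, κ * (C - #S * L) * τ r ≤ log (R t) - log (R (t - τ r)) :=
    fun r hr ↦ h.mul_le_log_sub_log (by linarith) (fun u hu ↦ by
      have := delaySum_le_card_mul (S := S) (τ := τ) (R := R) (t := u) fun q hq ↦
        (hℓL _ ⟨by linarith [hu.1, h.delay_le q hq], by linarith [hu.2, h.delay_nonneg q hq]⟩).2
      nlinarith [h.κ_pos]) hr
  have hchord : ∀ r ∈ S, log ℓ + (R (t - τ r) - ℓ) * s ≤ log (R (t - τ r)) := fun r hr ↦
    log_add_mul_slope_le_log hℓ₀ (hmem r hr).1 (hmem r hr).2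
  have hsum₁ := Finset.sum_le_sum hwindow
  have hsum₂ := Finset.sum_le_sum hchord
  simp only [Finset.sum_sub_distrib, Finset.sum_add_distrib, Finset.sum_const, nsmul_eq_mul,
    ← Finset.mul_sum, ← Finset.sum_mul] at hsum₁ hsum₂
  have hPs : (C - #S * ℓ) * s ≤ (∑ r ∈ S, R (t - τ r) - #S * ℓ) * s :=
    mul_le_mul_of_nonneg_right (sub_le_sub_right hPt _) hs
  have hexpand : #S * (log ℓ + (C / #S - ℓ) * s - κ * (∑ r ∈ S, τ r) * (L - C / #S)) =
      #S * log ℓ + (C - #S * ℓ) * s + κ * (C - #S * L) * ∑ r ∈ S, τ r := by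
    field_simp
    ring
  rw [← mul_le_mul_iff_of_pos_left hN, hexpand]
  linarith

theorem log_limsup_le (h : IsRCPSolution S τ τmax C κ R) (hS : S.Nonempty)
    (hR : IsBoundedUnder (· ≤ ·) atTop R) (hR' : IsBoundedUnder (· ≥ ·) atTop R)
    (hpos : 0 < liminf R atTop) (hosc : liminf R atTop < limsup R atTop) :
    log (limsup R atTop) ≤
      log (C / #S) + κ * (∑ r ∈ S, τ r) * (C / #S - liminf R atTop) := by
  set Λ := limsup R atTop
  set l := liminf R atTop
  -- at late times where `R` rises through `(Λ - 2e, Λ - e)` the delayed sum is below `C`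
  have key : ∀ e ∈ Ioo 0 ((Λ - l) / 2),
      log (Λ - 2 * e) ≤ log (C / #S) + κ * (∑ r ∈ S, τ r) * (C / #S - (l - e)) := by
    rintro e ⟨he, he'⟩
    obtain ⟨T, hT⟩ := eventually_atTop.1 (eventually_lt_of_lt_liminf (b := l - e) (by linarith) hR')
    have hrise := frequently_hasDerivAt_pos (c₁ := Λ - 2 * e) (c₂ := Λ - e) h.continuous
      ((eventually_gt_atTop 0).mono h.hasDerivAt) (by linarith)
      ((frequently_lt_of_liminf_lt hR.isCoboundedUnder_ge (by linarith)).mono fun _ ↦ le_of_lt)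
      ((frequently_lt_of_lt_limsup hR'.isCoboundedUnder_le (by linarith)).mono fun _ ↦ le_of_lt)
    obtain ⟨t, ⟨hRt, hderiv⟩, htT⟩ :=
      (hrise.and_eventually (eventually_ge_atTop (max T 0 + 2 * τmax))).exists
    have ht : 2 * τmax ≤ t := by linarith [le_max_right T 0]
    have hRt₀ := h.pos (t := t) (by linarith [h.τmax_nonneg])
    have hPt := pos_of_mul_pos_right hderiv (mul_pos h.κ_pos hRt₀).le
    calc log (Λ - 2 * e) ≤ log (R t) := log_le_log (by linarith) hRt.1.le
      _ ≤ _ := h.log_le_of_delaySum_le hS ht (by linarith) fun u hu ↦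
        (hT u (by linarith [hu.1, le_max_left T 0])).le
  have hδ : 0 < (Λ - l) / 2 := by linarith
  simpa using le_of_forall_mem_Ioo_le hδ (by fun_prop (disch := simp; linarith)) (by fun_prop) key

theorem slope_log_le (h : IsRCPSolution S τ τmax C κ R) (hS : S.Nonempty)
    (hR : IsBoundedUnder (· ≤ ·) atTop R) (hR' : IsBoundedUnder (· ≥ ·) atTop R)
    (hpos : 0 < liminf R atTop) (hosc : liminf R atTop < limsup R atTop) :
    (C / #S - liminf R atTop) *
        ((log (limsup R atTop) - log (liminf R atTop)) / (limsup R atTop - liminf R atTop)) ≤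
      κ * (∑ r ∈ S, τ r) * (limsup R atTop - C / #S) := by
  set Λ := limsup R atTop
  set l := liminf R atTop
  -- at late times where `R` falls through `(l + e, l + 2e)` the delayed sum exceeds `C`
  have key : ∀ e ∈ Ioo 0 (min l ((Λ - l) / 2)),
      log (l - e) + (C / #S - (l - e)) * ((log (Λ + e) - log (l - e)) / (Λ + e - (l - e))) -
        κ * (∑ r ∈ S, τ r) * (Λ + e - C / #S) ≤ log (l + 2 * e) := by
    rintro e ⟨he, he'⟩
    have he₁ := he'.trans_le (min_le_left _ _)
    have he₂ := he'.trans_le (min_le_right _ _)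
    obtain ⟨T, hT⟩ := eventually_atTop.1
      ((eventually_lt_of_lt_liminf (b := l - e) (by linarith) hR').and
        (eventually_lt_of_limsup_lt (b := Λ + e) (by linarith) hR))
    have hfall := frequently_hasDerivAt_pos (f := fun t ↦ -R t) (c₁ := -(l + 2 * e))
      (c₂ := -(l + e)) h.continuous.neg
      ((eventually_gt_atTop 0).mono fun t ht ↦ (h.hasDerivAt t ht).neg) (by linarith)
      ((frequently_lt_of_lt_limsup hR'.isCoboundedUnder_le (by linarith)).mono
        fun _ h ↦ neg_le_neg h.le)
      ((frequently_lt_of_liminf_lt hR.isCoboundedUnder_ge (by linarith)).mono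
        fun _ h ↦ neg_le_neg h.le)
    obtain ⟨t, ⟨hRt, hderiv⟩, htT⟩ :=
      (hfall.and_eventually (eventually_ge_atTop (max T 0 + 2 * τmax))).exists
    have ht : 2 * τmax ≤ t := by linarith [le_max_right T 0]
    have hRt₀ := h.pos (t := t) (by linarith [h.τmax_nonneg])
    have hPt := neg_of_mul_neg_right (neg_pos.1 hderiv) (mul_pos h.κ_pos hRt₀).le
    calc _ ≤ log (R t) := h.le_log_of_le_delaySum hS (by linarith) ht (by linarith) fun u hu ↦
          have hu := hT u (by linarith [hu.1, le_max_left T 0])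
          ⟨hu.1.le, hu.2.le⟩
      _ ≤ log (l + 2 * e) := log_le_log hRt₀ (by linarith [hRt.1])
  have hδ : 0 < min l ((Λ - l) / 2) := lt_min hpos (by linarith)
  have := le_of_forall_mem_Ioo_le hδ (by fun_prop (disch := simp; linarith))
    (by fun_prop (disch := simp; linarith)) key
  simp only [sub_zero, add_zero, mul_zero] at this
  linarith

theorem tendsto (h : IsRCPSolution S τ τmax C κ R) (hS : S.Nonempty)
    (ha : κ * (∑ r ∈ S, τ r) * (C / #S) < 1 / 2) : Tendsto R atTop (𝓝 (C / #S)) := by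
  have hN : (0 : ℝ) < #S := by exact_mod_cast hS.card_pos
  obtain ⟨B, hB⟩ := h.exists_upper_bound hS
  obtain ⟨b, hb₀, hb⟩ := h.exists_pos_lower_bound hS hB
  have hR : IsBoundedUnder (· ≤ ·) atTop R :=
    isBoundedUnder_of_eventually_le ((eventually_ge_atTop (-τmax)).mono hB)
  have hR' : IsBoundedUnder (· ≥ ·) atTop R :=
    isBoundedUnder_of_eventually_ge ((eventually_ge_atTop (-τmax)).mono hb)
  have hpos : 0 < liminf R atTop :=
    hb₀.trans_le (le_liminf_of_le hR.isCoboundedUnder_ge ((eventually_ge_atTop (-τmax)).mono hb))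
  rcases (liminf_le_limsup hR hR').eq_or_lt with heq | hosc
  · have hL := tendsto_of_liminf_eq_limsup heq rfl hR hR'
    rwa [← h.eq_of_tendsto hS hL (heq ▸ hpos)]
  have hσ : 0 ≤ κ * ∑ r ∈ S, τ r := mul_nonneg h.κ_pos.le (Finset.sum_nonneg h.delay_nonneg)
  have h₁ := h.log_limsup_le hS hR hR' hpos hosc
  have hlm : liminf R atTop ≤ C / #S := by
    by_contra! hlt
    have := log_lt_log (div_pos h.C_pos hN) hlt
    have := log_le_log hpos hosc.le
    nlinarith
  exact absurd (le_of_log_sub_log_le hσ ha hpos hlm (by linarith)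
    (h.slope_log_le hS hR hR' hpos hosc)) hosc.not_ge

end IsRCPSolution

theorem stmt_9_general {ι : Type*} (S : Finset ι) (hS : S.Nonempty)
    (τ : ι → ℝ) (hτ : ∀ r ∈ S, 0 ≤ τ r)
    (N : ℕ) (hN : N = S.card)
    (Tbar τmax : ℝ) (hTbar : Tbar = (∑ r ∈ S, τ r) / N)
    (hτmax : IsGreatest (τ '' S) τmax)
    (C κ : ℝ) (hC : 0 < C) (hκ : 0 < κ)
    (ha : κ * C * Tbar < 1/2)
    (R : ℝ → ℝ) (hRcont : Continuous R)
    (hRpos : ∀ t ∈ Icc (-τmax) 0, 0 < R t)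
    (hode : ∀ t > 0, HasDerivAt R (κ * R t * (C - ∑ r ∈ S, R (t - τ r))) t) :
    Tendsto R atTop (nhds (C / N)) := by
  obtain ⟨r₀, hr₀, hτr₀⟩ := hτmax.1
  have h : IsRCPSolution S τ τmax C κ R :=
    { delay_nonneg := hτ
      delay_le := fun r hr ↦ hτmax.2 (mem_image_of_mem τ hr)
      τmax_nonneg := hτr₀ ▸ hτ r₀ hr₀
      C_pos := hC
      κ_pos := hκ
      continuous := hRcont
      pos_of_mem_Icc := hRpos
      hasDerivAt := hode }
  subst hN hTbar
  exact h.tendsto hS (by convert ha using 1; ring)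

theorem stmt_9 {ι : Type*} (S : Finset ι) (hS : S.Nonempty)
    (τ : ι → ℝ) (hτ : ∀ r ∈ S, 0 ≤ τ r)
    (N : ℕ) (hN : N = S.card)
    (Tbar τmax : ℝ) (hTbar : Tbar = (∑ r ∈ S, τ r) / N)
    (hτmax : IsGreatest (τ '' S) τmax)
    (C κ : ℝ) (hC : 0 < C) (hκ : 0 < κ)
    (ha : κ * C * Tbar < 1/2)
    (R : ℝ → ℝ) (hRcont : Continuous R)
    (hRpos : ∀ t ∈ Icc (-τmax) 0, 0 < R t)
    (hRbdd : BddAbove (R '' Icc (-τmax) 0))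
    (hode : ∀ t > 0, HasDerivAt R (κ * R t * (C - ∑ r ∈ S, R (t - τ r))) t) :
    Tendsto R atTop (nhds (C / N)) :=
  stmt_9_general S hS τ hτ N hN Tbar τmax hTbar hτmax C κ hC hκ ha R hRcont hRpos hode
end

section
/- Under condition κ²T̄²ȳ(ȳ+w)f⁽¹⁾f⁽²⁾/(1−κT̄f(0)) < 1 with w = κT̄f(0)ȳ/(1−κT̄f(0)), one has κT̄·((ȳ+w)/N)·|f(ȳ+w)| < ȳ/N, i.e., κ(ȳ+w)T̄|f(ȳ+w)| < ȳ. -/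
open Set

lemma mul_le_of_isGreatest_quotient {g : ℝ → ℝ} {b M u : ℝ}
    (hM : IsGreatest {x : ℝ | ∃ u ∈ Ioc (0:ℝ) b, x = g u / u} M) (hu : u ∈ Ioc 0 b) :
    g u ≤ M * u :=
  (div_le_iff₀ hu.1).1 (hM.2 ⟨u, hu, rfl⟩)

lemma mul_lt_of_quotient_bounds {k f₀ y w F f₁ f₂ : ℝ} (hk : 0 < k) (hy : 0 < y) (hw : 0 < w)
    (hsmall : k * f₀ < 1) (hwdef : w * (1 - k * f₀) = k * f₀ * y)
    (hF₀ : 0 ≤ F) (hF : F ≤ f₂ * w) (hf₀ : f₀ ≤ f₁ * y)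
    (hcond : k ^ 2 * y * (y + w) * f₁ * f₂ / (1 - k * f₀) < 1) :
    k * (y + w) * F < y := by
  have hc : 0 < 1 - k * f₀ := by linarith
  have hf₂ : 0 ≤ f₂ := nonneg_of_mul_nonneg_left (hF₀.trans hF) hw
  have hcond' : k ^ 2 * y * (y + w) * f₁ * f₂ < 1 - k * f₀ := (div_lt_one hc).1 hcond
  refine lt_of_mul_lt_mul_right ?_ hc.le
  calc k * (y + w) * F * (1 - k * f₀)
      ≤ k * (y + w) * (f₂ * w) * (1 - k * f₀) := by gcongr
    _ = k ^ 2 * (y + w) * f₂ * (f₀ * y) := by linear_combination k * (y + w) * f₂ * hwdef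
    _ ≤ k ^ 2 * (y + w) * f₂ * (f₁ * y * y) := by gcongr
    _ = k ^ 2 * y * (y + w) * f₁ * f₂ * y := by ring
    _ < (1 - k * f₀) * y := mul_lt_mul_of_pos_right hcond' hy
    _ = y * (1 - k * f₀) := mul_comm _ _

theorem stmt_16 (κ Tbar ybar w f1 f2 : ℝ)
    (f : ℝ → ℝ) (hanti : StrictAnti f) (hf0 : 0 < f 0)
    (hybar : 0 < ybar) (hfzero : f ybar = 0)
    (hκ : 0 < κ) (hT : 0 < Tbar) (hsmall : κ * Tbar * f 0 < 1)
    (hw : w = κ * Tbar * f 0 * ybar / (1 - κ * Tbar * f 0))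
    (hf1 : IsGreatest {x : ℝ | ∃ u ∈ Ioc (0:ℝ) ybar, x = f (ybar - u) / u} f1)
    (hf2 : IsGreatest {x : ℝ | ∃ u ∈ Ioc (0:ℝ) w, x = -f (ybar + u) / u} f2)
    (hcond : κ^2 * Tbar^2 * ybar * (ybar + w) * f1 * f2 / (1 - κ * Tbar * f 0) < 1) :
    κ * (ybar + w) * Tbar * |f (ybar + w)| < ybar := by
  have hc : 0 < 1 - κ * Tbar * f 0 := by linarith
  have hwpos : 0 < w := by rw [hw]; positivity
  have hwdef : w * (1 - κ * Tbar * f 0) = κ * Tbar * f 0 * ybar := by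
    rw [hw]; exact div_mul_cancel₀ _ hc.ne'
  have h1 : f 0 ≤ f1 * ybar := by
    simpa using mul_le_of_isGreatest_quotient (g := fun u => f (ybar - u)) hf1 ⟨hybar, le_rfl⟩
  have h2 : -f (ybar + w) ≤ f2 * w :=
    mul_le_of_isGreatest_quotient (g := fun u => -f (ybar + u)) hf2 ⟨hwpos, le_rfl⟩
  have hneg : f (ybar + w) < 0 := hfzero ▸ hanti (lt_add_of_pos_right ybar hwpos)
  rw [← mul_pow] at hcond
  calc κ * (ybar + w) * Tbar * |f (ybar + w)| = κ * Tbar * (ybar + w) * |f (ybar + w)| := by ring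
    _ < ybar := mul_lt_of_quotient_bounds (mul_pos hκ hT) hybar hwpos hsmall hwdef
        (abs_nonneg _) (by rwa [abs_of_neg hneg]) h1 hcond
end
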